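/- The function F(x) = 1 - [1 + p·(αx + βx²/2)^γ]·exp(-(αx + βx²/2)^γ), for x > 0, with F(x) = 0 for x ≤ 0, is a valid distribution function: it is nondecreasing on (0,∞), F(0+) = 0, and F(x) → 1 as x → ∞, provided α ≥ 0, β ≥ 0, not both zero, γ > 0, p ∈ [0,1]. -/

import Mathlib

/-!
Write `F = G ∘ H` on `(0, ∞)`, where `H x = (αx + βx²/2)^γ` is the cumulative hazard of the
generalized linear exponential law and `G t = 1 - (1 + p t) e^{-t}` is the record-based
transmutation of the standard exponential distribution function. Since
`G' t = (1 - p + p t) e^{-t} ≥ 0` for `t ≥ 0` and `p ∈ [0, 1]`, with `G 0 = 0` and `G t → 1`,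
while `H` is nonnegative, nondecreasing, tends to `0` at `0⁺` and to `∞` at `∞`, the three
properties of a distribution function pass from `G` to `F`.
-/

open Filter Topology Set

noncomputable def recordTransmutedExpCDF (p t : ℝ) : ℝ :=
  1 - (1 + p * t) * Real.exp (-t)

noncomputable def gleCumHazard (α β γ x : ℝ) : ℝ :=
  (α * x + β * x ^ 2 / 2) ^ γ

theorem isDistributionFunction_comp {G H : ℝ → ℝ} (hG_mono : MonotoneOn G (Ici 0))
    (hG_cont : ContinuousAt G 0) (hG_zero : G 0 = 0) (hG_top : Tendsto G atTop (𝓝 1))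
    (hH_mono : MonotoneOn H (Ioi 0)) (hH_nonneg : MapsTo H (Ioi 0) (Ici 0))
    (hH_zero : Tendsto H (𝓝[>] 0) (𝓝 0)) (hH_top : Tendsto H atTop atTop) :
    let F : ℝ → ℝ := fun x => if x ≤ 0 then 0 else G (H x)
    MonotoneOn F (Ioi 0) ∧ Tendsto F (𝓝[>] 0) (𝓝 0) ∧ Tendsto F atTop (𝓝 1) := by
  intro F
  have hF : EqOn F (G ∘ H) (Ioi 0) := fun x (hx : 0 < x) => if_neg hx.not_ge
  refine ⟨(hG_mono.comp hH_mono hH_nonneg).congr hF.symm, ?_, ?_⟩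
  · have hGH : Tendsto (G ∘ H) (𝓝[>] 0) (𝓝 (G 0)) := hG_cont.tendsto.comp hH_zero
    rw [hG_zero] at hGH
    exact hGH.congr' (eventuallyEq_nhdsWithin_of_eqOn hF).symm
  · exact (hG_top.comp hH_top).congr' (EventuallyEq.symm <|
      (eventually_gt_atTop 0).mono fun x hx => hF hx)

namespace recordTransmutedExpCDF

theorem hasDerivAt (p t : ℝ) :
    HasDerivAt (recordTransmutedExpCDF p) ((1 - p + p * t) * Real.exp (-t)) t := by
  have hlin : HasDerivAt (fun t : ℝ => 1 + p * t) p t := by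
    simpa using ((hasDerivAt_id t).const_mul p).const_add 1
  refine ((hlin.mul (hasDerivAt_neg t).exp).const_sub 1).congr_deriv ?_
  ring

theorem continuous (p : ℝ) : Continuous (recordTransmutedExpCDF p) :=
  continuous_iff_continuousAt.2 fun t => (hasDerivAt p t).continuousAt

theorem apply_zero (p : ℝ) : recordTransmutedExpCDF p 0 = 0 := by
  simp [recordTransmutedExpCDF]

theorem monotoneOn {p : ℝ} (hp0 : 0 ≤ p) (hp1 : p ≤ 1) :
    MonotoneOn (recordTransmutedExpCDF p) (Ici 0) := by
  refine monotoneOn_of_deriv_nonneg (convex_Ici 0) (continuous p).continuousOn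
    (fun t _ => (hasDerivAt p t).differentiableAt.differentiableWithinAt) fun t ht => ?_
  rw [interior_Ici] at ht
  have hcoef : 0 ≤ 1 - p + p * t := by nlinarith [mem_Ioi.1 ht]
  rw [(hasDerivAt p t).deriv]
  positivity

theorem tendsto_atTop (p : ℝ) : Tendsto (recordTransmutedExpCDF p) atTop (𝓝 1) := by
  have hdecay : Tendsto (fun t : ℝ => (1 + p * t) * Real.exp (-t)) atTop (𝓝 0) := by
    have h := Real.tendsto_exp_neg_atTop_nhds_zero.add
      ((Real.tendsto_pow_mul_exp_neg_atTop_nhds_zero 1).const_mul p)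
    rw [mul_zero, add_zero] at h
    exact h.congr fun t => by ring
  have h := hdecay.const_sub 1
  rw [sub_zero] at h
  exact h

end recordTransmutedExpCDF

section QuadraticHazard

variable {α β : ℝ}

theorem monotoneOn_linear_add_half_sq (hα : 0 ≤ α) (hβ : 0 ≤ β) :
    MonotoneOn (fun x : ℝ => α * x + β * x ^ 2 / 2) (Ici 0) := by
  intro x (hx : 0 ≤ x) y _ hxy
  dsimp only
  gcongr

theorem tendsto_linear_add_half_sq_atTop (hα : 0 ≤ α) (hβ : 0 ≤ β) (hαβ : ¬(α = 0 ∧ β = 0)) :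
    Tendsto (fun x : ℝ => α * x + β * x ^ 2 / 2) atTop atTop := by
  rcases not_and_or.1 hαβ with hα0 | hβ0
  · have hlin := tendsto_id.const_mul_atTop (lt_of_le_of_ne hα (Ne.symm hα0))
    exact hlin.atTop_add_nonneg fun x => by positivity
  · have hquad := ((tendsto_pow_atTop two_ne_zero).const_mul_atTop
      (lt_of_le_of_ne hβ (Ne.symm hβ0))).atTop_div_const two_pos
    refine Tendsto.zero_eventuallyLE_add_atTop ?_ hquad
    filter_upwards [eventually_ge_atTop 0] with x hx
    exact mul_nonneg hα hx

end QuadraticHazard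

namespace gleCumHazard

variable {α β γ : ℝ}

theorem nonneg (hα : 0 ≤ α) (hβ : 0 ≤ β) {x : ℝ} (hx : 0 ≤ x) : 0 ≤ gleCumHazard α β γ x := by
  unfold gleCumHazard
  positivity

theorem monotoneOn (hα : 0 ≤ α) (hβ : 0 ≤ β) (hγ : 0 ≤ γ) :
    MonotoneOn (gleCumHazard α β γ) (Ici 0) := fun x (hx : 0 ≤ x) y hy hxy =>
  Real.rpow_le_rpow (by positivity) (monotoneOn_linear_add_half_sq hα hβ hx hy hxy) hγ

theorem tendsto_nhdsGT_zero (hγ : 0 < γ) : Tendsto (gleCumHazard α β γ) (𝓝[>] 0) (𝓝 0) := by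
  have hbase : Tendsto (fun x : ℝ => α * x + β * x ^ 2 / 2) (𝓝 0) (𝓝 0) := by
    simpa using (show Continuous (fun x : ℝ => α * x + β * x ^ 2 / 2) by fun_prop).tendsto 0
  have h := (Real.continuousAt_rpow_const 0 γ (Or.inr hγ.le)).tendsto.comp hbase
  rw [Real.zero_rpow hγ.ne'] at h
  exact h.mono_left nhdsWithin_le_nhds

theorem tendsto_atTop (hα : 0 ≤ α) (hβ : 0 ≤ β) (hαβ : ¬(α = 0 ∧ β = 0)) (hγ : 0 < γ) :
    Tendsto (gleCumHazard α β γ) atTop atTop :=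
  (tendsto_rpow_atTop hγ).comp (tendsto_linear_add_half_sq_atTop hα hβ hαβ)

end gleCumHazard

theorem rtgle_is_df (α β γ p : ℝ) (hα : 0 ≤ α) (hβ : 0 ≤ β)
    (hαβ : ¬(α = 0 ∧ β = 0)) (hγ : 0 < γ) (hp0 : 0 ≤ p) (hp1 : p ≤ 1) :
    let F : ℝ → ℝ := fun x => if x ≤ 0 then 0 else
      1 - (1 + p * (α * x + β * x ^ 2 / 2) ^ γ) * Real.exp (-(α * x + β * x ^ 2 / 2) ^ γ)
    MonotoneOn F (Set.Ioi 0) ∧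
    Tendsto F (𝓝[>] 0) (𝓝 0) ∧
    Tendsto F atTop (𝓝 1) :=
  isDistributionFunction_comp (G := recordTransmutedExpCDF p) (H := gleCumHazard α β γ)
    (recordTransmutedExpCDF.monotoneOn hp0 hp1) (recordTransmutedExpCDF.continuous p).continuousAt
    (recordTransmutedExpCDF.apply_zero p) (recordTransmutedExpCDF.tendsto_atTop p)
    ((gleCumHazard.monotoneOn hα hβ hγ.le).mono Ioi_subset_Ici_self)
    (fun _ hx => gleCumHazard.nonneg hα hβ (le_of_lt hx)) (gleCumHazard.tendsto_nhdsGT_zero hγ)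
    (gleCumHazard.tendsto_atTop hα hβ hαβ hγ)
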